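/- Set g = h₅∘h₄∘h₁ and w = g(e₂+e₃) − (e₂+e₃). Then for every natural number s one has gˢ(e₂+e₃) = (e₂+e₃) + s·w, and consequently g is an element of infinite order in the group of linear automorphisms of ℚ⁵. -/
import Mathlib


open Matrix

/-- The Gram matrix of the intersection form on the subspace of `ℤ₂`-invariant cycles
in the Milnor fibre of `x₁⁴ + x₂⁴ + y₁²` (the singularity `M₅`), in the basis
`δ₁ = Δ₁, δ₂ = Δ₂+Δ₄, δ₃ = Δ₃+Δ₅, δ₄ = Δ₆+Δ₈, δ₅ = Δ₇+Δ₉`. -/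
def G : Matrix (Fin 5) (Fin 5) ℚ :=
  !![-2,  2,  2, -2, -2;
      2, -4,  0,  2,  2;
      2,  0, -4,  2,  2;
     -2,  2,  2, -4,  0;
     -2,  2,  2,  0, -4]

/-- The associated symmetric bilinear form `B(u,v) = uᵀGv` on `ℚ⁵`. -/
def B (u v : Fin 5 → ℚ) : ℚ := u ⬝ᵥ G.mulVec v

/-- The standard basis `e₁, …, e₅` of `ℚ⁵` (0-indexed). -/
def e : Fin 5 → (Fin 5 → ℚ) := fun i => Pi.single i 1

/-- The reflection `hᵢ(a) = a − (2B(a,eᵢ)/B(eᵢ,eᵢ))·eᵢ` in the basis vector `eᵢ`. -/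
def h (i : Fin 5) (a : Fin 5 → ℚ) : Fin 5 → ℚ :=
  a - (2 * B a (e i) / B (e i) (e i)) • e i

/-- The composition `g = h₅∘h₄∘h₁` (written 0-indexed). -/
def g : (Fin 5 → ℚ) → (Fin 5 → ℚ) := h 4 ∘ h 3 ∘ h 0

/-- The vector `w = g(e₂+e₃) − (e₂+e₃)`. -/
def w : Fin 5 → ℚ := g (e 1 + e 2) - (e 1 + e 2)

lemma key (t : ℚ) : g ((e 1 + e 2) + t • w) = (e 1 + e 2) + (t+1) • w := by
  funext i
  fin_cases i <;>
    simp [g, h, w, B, e, G, Matrix.mulVec, dotProduct, Fin.sum_univ_five,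
      Pi.single_apply, Matrix.vecHead, Matrix.vecTail] <;> ring

lemma w0 : w 0 = 4 := by
  simp [g, h, w, B, e, G, Matrix.mulVec, dotProduct, Fin.sum_univ_five,
    Pi.single_apply, Matrix.vecHead, Matrix.vecTail]
  norm_num

/-- For every natural number `s`, `gˢ(e₂+e₃) = (e₂+e₃) + s·w`; consequently `g` has
infinite order in the group of linear automorphisms of `ℚ⁵`. -/
theorem g_iterates_and_infinite_order :
    (∀ s : ℕ, g^[s] (e 1 + e 2) = (e 1 + e 2) + (s : ℚ) • w) ∧
      ∀ s : ℕ, 0 < s → g^[s] ≠ id := by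
  have main : ∀ s : ℕ, g^[s] (e 1 + e 2) = (e 1 + e 2) + (s : ℚ) • w := by
    intro s
    induction s with
    | zero => simp
    | succ n ih =>
      rw [Function.iterate_succ_apply', ih, key]
      push_cast; ring_nf
  refine ⟨main, fun s hs hid => ?_⟩
  have h1 := main s
  rw [hid, id_eq] at h1
  have h2 := congrFun h1 0
  simp [w0, e, Pi.single_apply] at h2
  exact absurd (Nat.cast_eq_zero.mp h2) hs.ne'
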